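/- The function f̃ is invariant under left multiplication by GL₂(R) (f̃(gM) = f̃(M) for all g ∈ GL₂(R), M ∈ 𝕄), and its values on coset representatives are: f̃(g·[[1,ĉ],[0,π]]) = χ(c) for every g ∈ GL₂(R) and c ∈ F, and f̃(g·[[π,0],[0,1]]) = 0 for every g ∈ GL₂(R). Equivalently, f̃ = Σ_{c ∈ Fˣ} χ(c)·(indicator function of the left coset GL₂(R)·[[1,ĉ],[0,π]]). -/

import Mathlib

open IsLocalRing

noncomputable section

variable (R : Type*) [CommRing R] [IsDomain R] [IsDiscreteValuationRing R]

/-- The condition defining the set `𝕄` of `2×2` matrices over `R` whose determinant has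
valuation exactly `1`. -/
def inMM (M : Matrix (Fin 2) (Fin 2) R) : Prop :=
  M.det ∈ maximalIdeal R ∧ M.det ∉ (maximalIdeal R) ^ 2

/-- The set `𝕄`, as a type. -/
abbrev MM := {M : Matrix (Fin 2) (Fin 2) R // inMM R M}

variable [Fintype (ResidueField R)] [DecidableEq (ResidueField R)]

/-- The function `f̃ : 𝕄 → ℂ`: `f̃(M) = χ(M̄₁₁·M̄₁₂)` if `M₁₁, M₁₂` are units,
`f̃(M) = χ(M̄₂₁·M̄₂₂)` if `M₂₁, M₂₂` are units, and `f̃(M) = 0` otherwise. -/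
def ftilde (M : MM R) : ℂ := by
  classical
  exact
    if IsUnit (M.1 0 0) ∧ IsUnit (M.1 0 1) then
      ((quadraticChar (ResidueField R) (residue R (M.1 0 0) * residue R (M.1 0 1)) : ℤ) : ℂ)
    else if IsUnit (M.1 1 0) ∧ IsUnit (M.1 1 1) then
      ((quadraticChar (ResidueField R) (residue R (M.1 1 0) * residue R (M.1 1 1)) : ℤ) : ℂ)
    else 0

end

/-!
`f̃(M)` depends only on `M̄`, which is singular because `det M ∈ m`. A singular `2×2` matrix over
`F` is `v wᵀ` with `v ≠ 0`; each nonzero row of it is `a·w` with `a ≠ 0`, so `f̃(M) = χ(w₀w₁)`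
as `χ(a²) = 1`. Left multiplication by `g ∈ GL₂(R)` replaces `v` by `ḡv ≠ 0` and keeps `w`.
For the coset representatives, `M̄` is `[[1,c],[0,0]]` resp. `[[0,0],[0,1]]`.
-/

open Matrix

section ResidueField

variable {F : Type*} [Field F] [Fintype F] [DecidableEq F]

def fbar (N : Matrix (Fin 2) (Fin 2) F) : ℂ :=
  if N 0 0 ≠ 0 ∧ N 0 1 ≠ 0 then ((quadraticChar F (N 0 0 * N 0 1) : ℤ) : ℂ)
  else if N 1 0 ≠ 0 ∧ N 1 1 ≠ 0 then ((quadraticChar F (N 1 0 * N 1 1) : ℤ) : ℂ)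
  else 0

omit [Fintype F] [DecidableEq F] in
lemma exists_vecMulVec_of_det_eq_zero {N : Matrix (Fin 2) (Fin 2) F} (hN : N.det = 0) :
    ∃ v w : Fin 2 → F, v ≠ 0 ∧ N = vecMulVec v w := by
  rw [det_fin_two, sub_eq_zero] at hN
  by_cases h00 : N 0 0 = 0
  · by_cases h01 : N 0 1 = 0
    · refine ⟨![0, 1], N 1, by simp [funext_iff], ?_⟩
      ext i j; fin_cases i <;> fin_cases j <;> simp [vecMulVec_apply, h00, h01]
    · have h10 : N 1 0 = 0 := by simpa [h00, h01] using hN.symm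
      refine ⟨![N 0 1, N 1 1], ![0, 1], by simp [funext_iff, h01], ?_⟩
      ext i j; fin_cases i <;> fin_cases j <;> simp [vecMulVec_apply, h00, h10]
  · refine ⟨![N 0 0, N 1 0], ![1, N 0 1 / N 0 0], by simp [funext_iff, h00], ?_⟩
    ext i j; fin_cases i <;> fin_cases j <;> simp [vecMulVec_apply] <;> field_simp
    linear_combination hN

lemma fbar_vecMulVec {v : Fin 2 → F} (hv : v ≠ 0) (w : Fin 2 → F) :
    fbar (vecMulVec v w) = ((quadraticChar F (w 0 * w 1) : ℤ) : ℂ) := by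
  have hsq : ∀ a : F, a ≠ 0 →
      quadraticChar F (a * w 0 * (a * w 1)) = quadraticChar F (w 0 * w 1) := fun a ha => by
    rw [show a * w 0 * (a * w 1) = a ^ 2 * (w 0 * w 1) by ring, map_mul,
      quadraticChar_sq_one' ha, one_mul]
  by_cases hw0 : w 0 = 0
  · simp [fbar, vecMulVec_apply, hw0]
  by_cases hw1 : w 1 = 0
  · simp [fbar, vecMulVec_apply, hw1]
  by_cases h0 : v 0 = 0
  · have h1 : v 1 ≠ 0 := fun h1 => hv (by ext i; fin_cases i <;> simp [h0, h1])
    simp [fbar, vecMulVec_apply, h0, h1, hw0, hw1, hsq]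
  · simp [fbar, vecMulVec_apply, h0, hw0, hw1, hsq]

lemma fbar_mul_of_det_eq_zero {G : Matrix (Fin 2) (Fin 2) F} (hG : IsUnit G)
    {N : Matrix (Fin 2) (Fin 2) F} (hN : N.det = 0) : fbar (G * N) = fbar N := by
  obtain ⟨v, w, hv, rfl⟩ := exists_vecMulVec_of_det_eq_zero hN
  have hGv : G *ᵥ v ≠ 0 := fun h => hv (mulVec_injective_of_isUnit hG (by rw [h, mulVec_zero]))
  rw [mul_vecMulVec, fbar_vecMulVec hGv, fbar_vecMulVec hv]

end ResidueField

section DVR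

variable {R : Type*} [CommRing R] [IsDomain R] [IsDiscreteValuationRing R]
  [Fintype (ResidueField R)] [DecidableEq (ResidueField R)]

lemma ftilde_eq_fbar_map (M : MM R) : ftilde R M = fbar (M.1.map (residue R)) := by
  unfold ftilde fbar
  simp only [← residue_ne_zero_iff_isUnit, map_apply]
  congr

lemma ftilde_units_mul_eq_fbar (g : (Matrix (Fin 2) (Fin 2) R)ˣ) {N : Matrix (Fin 2) (Fin 2) R}
    (hN : N.det ∈ maximalIdeal R) (h : inMM R (g * N)) :
    ftilde R ⟨g * N, h⟩ = fbar (N.map (residue R)) := by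
  rw [ftilde_eq_fbar_map, Matrix.map_mul]
  refine fbar_mul_of_det_eq_zero ?_ ?_
  · simpa [RingHom.mapMatrix_apply] using g.isUnit.map (residue R).mapMatrix
  · rwa [← RingHom.mapMatrix_apply, ← RingHom.map_det, residue_eq_zero_iff]

end DVR

theorem stmt_4 (R : Type*) [CommRing R] [IsDomain R] [IsDiscreteValuationRing R]
    [Fintype (ResidueField R)] [DecidableEq (ResidueField R)]
    (π : R) (hπ : maximalIdeal R = Ideal.span {π})
    (lft : ResidueField R → R) (hlft : ∀ c, residue R (lft c) = c) :
    (∀ (g : (Matrix (Fin 2) (Fin 2) R)ˣ) (M : MM R)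
        (h : inMM R ((g : Matrix (Fin 2) (Fin 2) R) * M.1)),
        ftilde R ⟨(g : Matrix (Fin 2) (Fin 2) R) * M.1, h⟩ = ftilde R M) ∧
    (∀ (g : (Matrix (Fin 2) (Fin 2) R)ˣ) (c : ResidueField R)
        (h : inMM R ((g : Matrix (Fin 2) (Fin 2) R) * !![1, lft c; 0, π])),
        ftilde R ⟨(g : Matrix (Fin 2) (Fin 2) R) * !![1, lft c; 0, π], h⟩ =
          ((quadraticChar (ResidueField R) c : ℤ) : ℂ)) ∧
    (∀ (g : (Matrix (Fin 2) (Fin 2) R)ˣ)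
        (h : inMM R ((g : Matrix (Fin 2) (Fin 2) R) * !![π, 0; 0, 1])),
        ftilde R ⟨(g : Matrix (Fin 2) (Fin 2) R) * !![π, 0; 0, 1], h⟩ = 0) := by
  have hπm : π ∈ maximalIdeal R := hπ ▸ Ideal.mem_span_singleton_self π
  have hπ0 : residue R π = 0 := (residue_eq_zero_iff π).2 hπm
  refine ⟨fun g M h => ?_, fun g c h => ?_, fun g h => ?_⟩
  · rw [ftilde_units_mul_eq_fbar g M.2.1, ftilde_eq_fbar_map]
  · rw [ftilde_units_mul_eq_fbar g (by simpa using hπm)]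
    by_cases hc : c = 0 <;> simp [fbar, hlft, hπ0, hc]
  · rw [ftilde_units_mul_eq_fbar g (by simpa using hπm)]
    simp [fbar, hπ0]
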